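/- Let f_1, ..., f_m be cop-SOS convex polynomials where f_i depends only on variables in Δ_i, and let y* be any feasible point of the sparse moment relaxation of order k (so A·π(y*) = b, C·π(y*) ≥ d, y*_0 = 1, and the moment and localizing matrices of each block y*_{Δ_i} are positive semidefinite). Then the point x* = π(y*) is feasible for the problem min{f(x) : Ax = b, Cx ≥ d, x ≥ 0} and f(x*) ≤ ⟨f, y*⟩. Consequently, if y* is optimal for the moment relaxation, then the relaxation value equals the true minimum and x* is a global minimizer. -/

import Mathlib

/-!
Cop-SOS convexity turns Taylor's formula with integral remainder into a positivity certificate: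
for `a ≥ 0`, along the segment `z(t) = a + t (x - a)` the remainder is
`∫₀¹ (1 - t) (x - a)ᵀ ∇²p(z(t)) (x - a) dt`, and `(1 - t) z(t) = (1 - t)² a + t (1 - t) x`, so
`p = p(a) + ∇p(a)·(X - a) + σ₀ + ∑ₗ Xₗ σₗ` where each `σ` is an integral `∫₀¹ μ(t) w(t, X)² dt`
with a weight `μ ≥ 0` on `[0, 1]`, hence a sum of squares (its Gram matrix is the positive
semidefinite moment matrix of `μ`). Setting the variables outside `Δ` to zero keeps the
certificate inside the block, and comparing growth along rays of the positive orthant bounds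
`deg σ₀ ≤ 2k` and `deg σₗ ≤ 2k - 2`. For `a = π(y)` the Riesz functional maps the affine part
to `p(a)` and the rest to a nonnegative number by the moment and localizing conditions.
-/

open MvPolynomial Matrix

/-- A polynomial is a sum of squares (SOS). -/
def IsSOS {n : ℕ} (σ : MvPolynomial (Fin n) ℝ) : Prop :=
  ∃ l : List (MvPolynomial (Fin n) ℝ), σ = (l.map (fun q => q ^ 2)).sum

/-- A polynomial `p` is cop-SOS convex if its Hessian has a decomposition
`∇²p(x) = P₀(x)P₀(x)ᵀ + ∑ᵢ xᵢ·Pᵢ(x)Pᵢ(x)ᵀ` for matrix polynomials `Pᵢ`. -/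
def CopSOSConvex {n : ℕ} (p : MvPolynomial (Fin n) ℝ) : Prop :=
  ∃ (r : ℕ) (P0 : Matrix (Fin n) (Fin r) (MvPolynomial (Fin n) ℝ))
    (P : Fin n → Matrix (Fin n) (Fin r) (MvPolynomial (Fin n) ℝ)),
    ∀ (x : Fin n → ℝ) (i j : Fin n),
      eval x (pderiv i (pderiv j p)) =
        ((P0.map (eval x)) * (P0.map (eval x))ᵀ
          + ∑ l, x l • ((P l).map (eval x) * ((P l).map (eval x))ᵀ)) i j

/-- The Riesz pairing of a polynomial with a (truncated) moment vector. -/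
noncomputable def riesz {n : ℕ} (p : MvPolynomial (Fin n) ℝ)
    (y : (Fin n →₀ ℕ) → ℝ) : ℝ :=
  ∑ α ∈ p.support, MvPolynomial.coeff α p * y α

open scoped Polynomial
open Polynomial (derivative)

theorem IsSumSq.map {R S F : Type*} [NonAssocSemiring R] [NonAssocSemiring S] [FunLike F R S]
    [RingHomClass F R S] (f : F) {s : R} (hs : IsSumSq s) : IsSumSq (f s) := by
  induction hs with
  | zero => simp [IsSumSq.zero]
  | sq_add a _ ih => simpa using IsSumSq.sq_add (f a) ih

section SumsOfSquares

variable {n : ℕ}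

theorem isSOS_iff_isSumSq {σ : MvPolynomial (Fin n) ℝ} : IsSOS σ ↔ IsSumSq σ := by
  constructor
  · rintro ⟨l, rfl⟩
    induction l with
    | nil => exact .zero
    | cons q l ih => simpa [sq] using IsSumSq.sq_add q ih
  · intro h
    induction h with
    | zero => exact ⟨[], rfl⟩
    | sq_add a _ ih =>
      obtain ⟨l, rfl⟩ := ih
      exact ⟨a :: l, by simp [sq]⟩

theorem IsSumSq.eval_nonneg {σ : MvPolynomial (Fin n) ℝ} (hσ : IsSumSq σ) (x : Fin n → ℝ) :
    0 ≤ eval x σ :=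
  (hσ.map (eval x)).nonneg

theorem IsSumSq.smul_of_nonneg {σ : MvPolynomial (Fin n) ℝ} (hσ : IsSumSq σ) {c : ℝ}
    (hc : 0 ≤ c) : IsSumSq (c • σ) := by
  rw [MvPolynomial.smul_eq_C_mul, ← Real.mul_self_sqrt hc, C_mul]
  exact (IsSumSq.mul_self _).mul hσ

end SumsOfSquares

section Riesz

variable {n : ℕ}

theorem riesz_eq_sum_of_support_subset {p : MvPolynomial (Fin n) ℝ} (y : (Fin n →₀ ℕ) → ℝ)
    {s : Finset (Fin n →₀ ℕ)} (h : p.support ⊆ s) : riesz p y = ∑ α ∈ s, coeff α p * y α :=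
  Finset.sum_subset h fun α _ hα => by rw [notMem_support_iff.mp hα, zero_mul]

noncomputable def rieszLinear (y : (Fin n →₀ ℕ) → ℝ) : MvPolynomial (Fin n) ℝ →ₗ[ℝ] ℝ where
  toFun p := riesz p y
  map_add' p q := by
    classical
    rw [riesz_eq_sum_of_support_subset y support_add,
      riesz_eq_sum_of_support_subset y Finset.subset_union_left,
      riesz_eq_sum_of_support_subset y Finset.subset_union_right, ← Finset.sum_add_distrib]
    simp only [coeff_add, add_mul]
  map_smul' c p := by
    rw [riesz_eq_sum_of_support_subset y support_smul, riesz, RingHom.id_apply, smul_eq_mul,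
      Finset.mul_sum]
    simp only [coeff_smul, smul_eq_mul, mul_assoc]

theorem rieszLinear_apply (y : (Fin n →₀ ℕ) → ℝ) (p : MvPolynomial (Fin n) ℝ) :
    rieszLinear y p = riesz p y :=
  rfl

theorem riesz_C (c : ℝ) (y : (Fin n →₀ ℕ) → ℝ) :
    riesz (C c : MvPolynomial (Fin n) ℝ) y = c * y 0 := by
  rw [riesz_eq_sum_of_support_subset (p := C c) y (s := {0}) support_monomial_subset,
    Finset.sum_singleton, coeff_zero_C]

theorem riesz_X (j : Fin n) (y : (Fin n →₀ ℕ) → ℝ) :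
    riesz (X j : MvPolynomial (Fin n) ℝ) y = y (Finsupp.single j 1) := by
  simp [riesz, support_X]

end Riesz

noncomputable def unitIntegral : ℝ[X] →ₗ[ℝ] ℝ where
  toFun P := ∫ t in (0 : ℝ)..1, P.eval t
  map_add' P Q := by
    simp only [Polynomial.eval_add]
    exact intervalIntegral.integral_add (P.continuous.intervalIntegrable _ _)
      (Q.continuous.intervalIntegrable _ _)
  map_smul' c P := by
    simp only [Polynomial.eval_smul, smul_eq_mul, intervalIntegral.integral_const_mul,
      RingHom.id_apply]

theorem unitIntegral_apply (P : ℝ[X]) : unitIntegral P = ∫ t in (0 : ℝ)..1, P.eval t :=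
  rfl

theorem unitIntegral_nonneg {P : ℝ[X]} (hP : ∀ t ∈ Set.Icc (0 : ℝ) 1, 0 ≤ P.eval t) :
    0 ≤ unitIntegral P :=
  intervalIntegral.integral_nonneg zero_le_one hP

theorem Polynomial.eval_one_eq_add_unitIntegral (g : ℝ[X]) :
    g.eval 1 = g.eval 0 + (derivative g).eval 0 +
      unitIntegral ((1 - Polynomial.X) * derivative (derivative g)) := by
  set F := (1 - Polynomial.X) * derivative g + g
  have hF : derivative F = (1 - Polynomial.X) * derivative (derivative g) := by
    simp only [F, derivative_add, derivative_mul, derivative_sub, derivative_one,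
      derivative_X]
    ring
  rw [unitIntegral_apply, ← hF, intervalIntegral.integral_eq_sub_of_hasDerivAt
    (fun t _ => F.hasDerivAt t) (F.derivative.continuous.intervalIntegrable _ _)]
  simp [F]
  ring

noncomputable def momentMatrix (μ : ℝ[X]) (N : ℕ) : Matrix (Fin N) (Fin N) ℝ :=
  of fun a b => unitIntegral (μ * Polynomial.X ^ ((a : ℕ) + b))

theorem dotProduct_momentMatrix_mulVec (μ : ℝ[X]) {N : ℕ} (w : Fin N → ℝ) :
    w ⬝ᵥ (momentMatrix μ N *ᵥ w) =
      unitIntegral (μ * (∑ a, Polynomial.C (w a) * Polynomial.X ^ (a : ℕ)) ^ 2) := by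
  rw [sq, Finset.sum_mul_sum, Finset.mul_sum, map_sum]
  simp only [dotProduct, mulVec, momentMatrix, of_apply, Finset.mul_sum, map_sum]
  refine Finset.sum_congr rfl fun a _ => Finset.sum_congr rfl fun b _ => ?_
  rw [show μ * (Polynomial.C (w a) * Polynomial.X ^ (a : ℕ) *
      (Polynomial.C (w b) * Polynomial.X ^ (b : ℕ))) =
      (w a * w b) • (μ * Polynomial.X ^ ((a : ℕ) + b)) by
    rw [← Polynomial.C_mul', Polynomial.C_mul, pow_add]; ring, map_smul, smul_eq_mul]
  ring

theorem posSemidef_momentMatrix {μ : ℝ[X]} (hμ : ∀ t ∈ Set.Icc (0 : ℝ) 1, 0 ≤ μ.eval t)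
    (N : ℕ) : (momentMatrix μ N).PosSemidef := by
  refine posSemidef_iff_dotProduct_mulVec.mpr ⟨?_, fun w => ?_⟩
  · ext a b
    simp [momentMatrix, add_comm]
  · rw [star_trivial, dotProduct_momentMatrix_mulVec]
    exact unitIntegral_nonneg fun t ht => by
      simpa using mul_nonneg (hμ t ht) (sq_nonneg _)

theorem exists_isSumSq_algHom_eq_unitIntegral {R : Type*} [CommRing R] [Algebra ℝ R] {μ : ℝ[X]}
    (hμ : ∀ t ∈ Set.Icc (0 : ℝ) 1, 0 ≤ μ.eval t) (W : R[X]) :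
    ∃ σ : R, IsSumSq σ ∧
      ∀ φ : R →ₐ[ℝ] ℝ, φ σ = unitIntegral (μ * W.map (φ : R →+* ℝ) ^ 2) := by
  set N := W.natDegree + 1
  obtain ⟨m, v, hv⟩ := posSemidef_iff_eq_sum_vecMulVec.mp (posSemidef_momentMatrix hμ N)
  refine ⟨∑ r, (∑ a : Fin N, v r a • W.coeff a) ^ 2, IsSumSq.sum_sq _ _, fun φ => ?_⟩
  set w : Fin N → ℝ := fun a => φ (W.coeff a)
  have hW : W.map (φ : R →+* ℝ) = ∑ a : Fin N, Polynomial.C (w a) * Polynomial.X ^ (a : ℕ) := by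
    rw [(W.map (φ : R →+* ℝ)).as_sum_range_C_mul_X_pow' (n := N)
      (Polynomial.natDegree_map_le.trans_lt W.natDegree.lt_succ_self),
      ← Fin.sum_univ_eq_sum_range (fun a => Polynomial.C ((W.map (φ : R →+* ℝ)).coeff a) *
        Polynomial.X ^ a)]
    simp [w]
  calc φ (∑ r, (∑ a : Fin N, v r a • W.coeff a) ^ 2) = ∑ r, (v r ⬝ᵥ w) ^ 2 := by
        simp [w, dotProduct]
    _ = w ⬝ᵥ (momentMatrix μ N *ᵥ w) := by
        simp [hv, sum_mulVec, sum_dotProduct, vecMulVec_mulVec, dotProduct_comm w, sq]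
    _ = _ := by rw [dotProduct_momentMatrix_mulVec, hW]

theorem exists_isSumSq_algHom_eq_unitIntegral_sum {R ι : Type*} [CommRing R] [Algebra ℝ R]
    [Fintype ι] {μ : ℝ[X]} (hμ : ∀ t ∈ Set.Icc (0 : ℝ) 1, 0 ≤ μ.eval t) (W : ι → R[X]) :
    ∃ σ : R, IsSumSq σ ∧
      ∀ φ : R →ₐ[ℝ] ℝ, φ σ = unitIntegral (μ * ∑ c, (W c).map (φ : R →+* ℝ) ^ 2) := by
  choose σ hσ hσφ using fun c => exists_isSumSq_algHom_eq_unitIntegral hμ (W c)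
  refine ⟨∑ c, σ c, IsSumSq.sum fun c _ => hσ c, fun φ => ?_⟩
  simp only [map_sum, hσφ, Finset.mul_sum]

section Line

variable {ι : Type*}

/-- `p (a + T • (X - a))`, as a polynomial in `T` with coefficients in `ℝ[X]`. -/
noncomputable def restrictToLine (a : ι → ℝ) : MvPolynomial ι ℝ →ₐ[ℝ] (MvPolynomial ι ℝ)[X] :=
  aeval fun j => Polynomial.C (C (a j)) + Polynomial.C (X j - C (a j)) * Polynomial.X

theorem eval_map_restrictToLine (a x : ι → ℝ) (t : ℝ) (p : MvPolynomial ι ℝ) :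
    ((restrictToLine a p).map (eval x)).eval t = eval (a + t • (x - a)) p := by
  induction p using MvPolynomial.induction_on with
  | C c => simp [restrictToLine]
  | add p q hp hq => simp [hp, hq]
  | mul_X p j hp =>
    simp only [map_mul, Polynomial.map_mul, Polynomial.eval_mul, hp]
    simp [restrictToLine, mul_comm]

noncomputable def hessian (p : MvPolynomial ι ℝ) (z : ι → ℝ) : Matrix ι ι ℝ :=
  of fun i j => eval z (pderiv i (pderiv j p))

variable [Fintype ι] {κ : Type*}

noncomputable def lineVecMul (a : ι → ℝ) (M : Matrix ι κ (MvPolynomial ι ℝ)) :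
    κ → (MvPolynomial ι ℝ)[X] :=
  (fun j => Polynomial.C (X j - C (a j))) ᵥ* M.map (restrictToLine a)

theorem eval_map_lineVecMul (a x : ι → ℝ) (t : ℝ) (M : Matrix ι κ (MvPolynomial ι ℝ)) (c : κ) :
    ((lineVecMul a M c).map (eval x)).eval t = ((x - a) ᵥ* M.map (eval (a + t • (x - a)))) c := by
  simp [lineVecMul, vecMul, dotProduct, Polynomial.map_sum, Polynomial.eval_finsetSum,
    eval_map_restrictToLine]

theorem derivative_restrictToLine (a : ι → ℝ) (p : MvPolynomial ι ℝ) :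
    derivative (restrictToLine a p) =
      ∑ j, Polynomial.C (X j - C (a j)) * restrictToLine a (pderiv j p) := by
  classical
  induction p using MvPolynomial.induction_on with
  | C c => simp [restrictToLine]
  | add p q hp hq => simp [hp, hq, Finset.sum_add_distrib, mul_add]
  | mul_X p j hp =>
    have hX : derivative (restrictToLine a (X j)) = Polynomial.C (X j - C (a j)) := by
      simp [restrictToLine]
    simp only [map_mul, Polynomial.derivative_mul, hp, hX, Derivation.leibniz, pderiv_X,
      smul_eq_mul, map_add, mul_add, Finset.sum_add_distrib, Finset.sum_mul]
    simp [Pi.single_apply, mul_comm]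
    rw [add_comm]
    simp only [mul_assoc]

theorem eval_derivative_derivative_map_restrictToLine (a x : ι → ℝ) (t : ℝ)
    (p : MvPolynomial ι ℝ) :
    (derivative (derivative ((restrictToLine a p).map (eval x)))).eval t =
      ((x - a) ᵥ* hessian p (a + t • (x - a))) ⬝ᵥ (x - a) := by
  simp only [Polynomial.derivative_map, derivative_restrictToLine, Polynomial.derivative_sum,
    Polynomial.derivative_C_mul, Finset.mul_sum, Polynomial.map_sum, Polynomial.map_mul,
    Polynomial.map_C, Polynomial.eval_finsetSum, Polynomial.eval_mul, Polynomial.eval_C,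
    eval_map_restrictToLine]
  simp [vecMul, dotProduct, hessian, Finset.mul_sum, mul_comm]

theorem eval_eq_add_unitIntegral_restrictToLine (a x : ι → ℝ) (p : MvPolynomial ι ℝ) :
    eval x p = eval a p + ∑ j, eval a (pderiv j p) * (x j - a j) +
      unitIntegral ((1 - Polynomial.X) *
        derivative (derivative ((restrictToLine a p).map (eval x)))) := by
  have h1 : ((restrictToLine a p).map (eval x)).eval 1 = eval x p := by
    rw [eval_map_restrictToLine, one_smul, add_sub_cancel]
  have h0 : ((restrictToLine a p).map (eval x)).eval 0 = eval a p := by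
    rw [eval_map_restrictToLine, zero_smul, add_zero]
  have h0' : (derivative ((restrictToLine a p).map (eval x))).eval 0 =
      ∑ j, eval a (pderiv j p) * (x j - a j) := by
    simp only [Polynomial.derivative_map, derivative_restrictToLine, Polynomial.map_sum,
      Polynomial.eval_finsetSum, Polynomial.map_mul, Polynomial.eval_mul, eval_map_restrictToLine,
      zero_smul, add_zero]
    simp [mul_comm]
  rw [← h1, ← h0, ← h0']
  exact Polynomial.eval_one_eq_add_unitIntegral _

theorem one_sub_X_mul_derivative_derivative_map_restrictToLine {p : MvPolynomial ι ℝ}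
    {P₀ : Matrix ι κ (MvPolynomial ι ℝ)} {P : ι → Matrix ι κ (MvPolynomial ι ℝ)} [Fintype κ]
    (hH : ∀ z v : ι → ℝ, (v ᵥ* hessian p z) ⬝ᵥ v =
      (v ᵥ* P₀.map (eval z)) ⬝ᵥ (v ᵥ* P₀.map (eval z)) +
        ∑ l, z l * ((v ᵥ* (P l).map (eval z)) ⬝ᵥ (v ᵥ* (P l).map (eval z))))
    (a x : ι → ℝ) :
    (1 - Polynomial.X) * derivative (derivative ((restrictToLine a p).map (eval x))) =
      (1 - Polynomial.X) * ∑ c, (lineVecMul a P₀ c).map (eval x) ^ 2 +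
        ∑ l, (Polynomial.C (a l) *
            ((1 - Polynomial.X) ^ 2 * ∑ c, (lineVecMul a (P l) c).map (eval x) ^ 2) +
          Polynomial.C (x l) * (Polynomial.X * (1 - Polynomial.X) *
            ∑ c, (lineVecMul a (P l) c).map (eval x) ^ 2)) := by
  refine Polynomial.funext fun t => ?_
  simp only [Polynomial.eval_mul, Polynomial.eval_add, Polynomial.eval_sub, Polynomial.eval_one,
    Polynomial.eval_X, Polynomial.eval_C, Polynomial.eval_pow, Polynomial.eval_finsetSum,
    eval_derivative_derivative_map_restrictToLine, hH, eval_map_lineVecMul]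
  simp only [dotProduct, mul_add, Finset.mul_sum, sq]
  congr 1
  refine Finset.sum_congr rfl fun l _ => ?_
  simp only [Pi.add_apply, Pi.smul_apply, Pi.sub_apply, smul_eq_mul, ← Finset.mul_sum]
  ring

end Line

theorem vecMul_mul_transpose_dotProduct {R m k : Type*} [CommSemiring R] [Fintype m] [Fintype k]
    (v : m → R) (M : Matrix m k R) : (v ᵥ* (M * Mᵀ)) ⬝ᵥ v = (v ᵥ* M) ⬝ᵥ (v ᵥ* M) := by
  rw [← vecMul_vecMul, ← dotProduct_mulVec, mulVec_transpose]

section CopSOSConvex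

variable {n : ℕ}

theorem CopSOSConvex.exists_vecMul_hessian_dotProduct {p : MvPolynomial (Fin n) ℝ}
    (hp : CopSOSConvex p) :
    ∃ (r : ℕ) (P₀ : Matrix (Fin n) (Fin r) (MvPolynomial (Fin n) ℝ))
      (P : Fin n → Matrix (Fin n) (Fin r) (MvPolynomial (Fin n) ℝ)),
      ∀ z v : Fin n → ℝ, (v ᵥ* hessian p z) ⬝ᵥ v =
        (v ᵥ* P₀.map (eval z)) ⬝ᵥ (v ᵥ* P₀.map (eval z)) +
          ∑ l, z l * ((v ᵥ* (P l).map (eval z)) ⬝ᵥ (v ᵥ* (P l).map (eval z))) := by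
  obtain ⟨r, P₀, P, hP⟩ := hp
  refine ⟨r, P₀, P, fun z v => ?_⟩
  have hH : hessian p z = P₀.map (eval z) * (P₀.map (eval z))ᵀ +
      ∑ l, z l • ((P l).map (eval z) * ((P l).map (eval z))ᵀ) := by
    ext i j
    exact hP z i j
  simp only [hH, vecMul_add, add_dotProduct, vecMul_sum, sum_dotProduct, vecMul_smul,
    smul_dotProduct, smul_eq_mul, vecMul_mul_transpose_dotProduct]

theorem CopSOSConvex.exists_certificate {p : MvPolynomial (Fin n) ℝ} (hp : CopSOSConvex p)
    {a : Fin n → ℝ} (ha : ∀ j, 0 ≤ a j) :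
    ∃ (σ₀ : MvPolynomial (Fin n) ℝ) (σ : Fin n → MvPolynomial (Fin n) ℝ),
      IsSumSq σ₀ ∧ (∀ l, IsSumSq (σ l)) ∧
      p = C (eval a p) + ∑ j, eval a (pderiv j p) • (X j - C (a j)) + σ₀ + ∑ l, X l * σ l := by
  obtain ⟨r, P₀, P, hH⟩ := hp.exists_vecMul_hessian_dotProduct
  obtain ⟨S₀, hS₀, hS₀eval⟩ := exists_isSumSq_algHom_eq_unitIntegral_sum
    (μ := 1 - Polynomial.X) (fun t ht => by simpa using ht.2) (lineVecMul a P₀)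
  choose S₁ hS₁ hS₁eval using fun l => exists_isSumSq_algHom_eq_unitIntegral_sum
    (μ := (1 - Polynomial.X) ^ 2) (fun t _ => by simpa using sq_nonneg (1 - t))
    (lineVecMul a (P l))
  choose S₂ hS₂ hS₂eval using fun l => exists_isSumSq_algHom_eq_unitIntegral_sum
    (μ := Polynomial.X * (1 - Polynomial.X))
    (fun t ht => by simpa using mul_nonneg ht.1 (sub_nonneg.2 ht.2)) (lineVecMul a (P l))
  refine ⟨S₀ + ∑ l, a l • S₁ l, S₂,
    hS₀.add (IsSumSq.sum fun l _ => (hS₁ l).smul_of_nonneg (ha l)), hS₂, funext fun x => ?_⟩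
  have e₀ := hS₀eval (aeval x)
  have e₁ := fun l => hS₁eval l (aeval x)
  have e₂ := fun l => hS₂eval l (aeval x)
  simp only [coe_aeval_eq_eval, aeval_eq_eval] at e₀ e₁ e₂
  rw [eval_eq_add_unitIntegral_restrictToLine a x,
    one_sub_X_mul_derivative_derivative_map_restrictToLine hH]
  simp only [map_add, map_sum, Polynomial.C_mul', map_smul, smul_eq_mul, eval_C, eval_X,
    eval_sub, smul_eval, map_mul]
  rw [e₀, Finset.sum_add_distrib]
  simp only [e₁, e₂]
  ring

end CopSOSConvex

theorem MvPolynomial.IsHomogeneous.eval_smul {R ι : Type*} [CommSemiring R]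
    {φ : MvPolynomial ι R} {m : ℕ} (hφ : φ.IsHomogeneous m) (s : R) (u : ι → R) :
    eval (s • u) φ = s ^ m * eval u φ := by
  simp only [eval_eq, Finset.mul_sum]
  refine Finset.sum_congr rfl fun d hd => ?_
  have hdeg : ∑ i ∈ d.support, d i = m := by
    rw [← Finsupp.degree_apply, Finsupp.degree_eq_weight_one]
    exact hφ (mem_support_iff.mp hd)
  simp only [Pi.smul_apply, smul_eq_mul, mul_pow, Finset.prod_mul_distrib,
    Finset.prod_pow_eq_pow_sum, hdeg]
  ring

theorem Polynomial.leadingCoeff_nonneg_of_eval_nonneg {P : ℝ[X]}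
    (hP : ∀ s : ℝ, 0 < s → 0 ≤ P.eval s) : 0 ≤ P.leadingCoeff := by
  by_contra! hlt
  rcases le_or_gt P.degree 0 with hdeg | hdeg
  · rw [Polynomial.eq_C_of_degree_le_zero hdeg, Polynomial.leadingCoeff_C] at hlt
    have := hP 1 one_pos
    rw [Polynomial.eq_C_of_degree_le_zero hdeg, Polynomial.eval_C] at this
    linarith
  · have hbot := (P.tendsto_atBot_of_leadingCoeff_nonpos hdeg hlt.le).eventually
      (Filter.eventually_lt_atBot 0)
    obtain ⟨s, hneg, hs⟩ := (hbot.and (Filter.eventually_gt_atTop 0)).exists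
    exact (hP s hs).not_gt hneg

section Degree

variable {ι : Type*}

noncomputable def rayPolynomial (g : MvPolynomial ι ℝ) (u : ι → ℝ) : ℝ[X] :=
  ∑ e ∈ Finset.range (g.totalDegree + 1),
    Polynomial.C (eval u (homogeneousComponent e g)) * Polynomial.X ^ e

theorem eval_rayPolynomial (g : MvPolynomial ι ℝ) (u : ι → ℝ) (s : ℝ) :
    (rayPolynomial g u).eval s = eval (s • u) g := by
  conv_rhs => rw [← sum_homogeneousComponent g]
  simp only [rayPolynomial, Polynomial.eval_finsetSum, Polynomial.eval_mul, Polynomial.eval_C,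
    Polynomial.eval_pow, Polynomial.eval_X, map_sum,
    (homogeneousComponent_isHomogeneous _ g).eval_smul, mul_comm]

theorem coeff_rayPolynomial (g : MvPolynomial ι ℝ) (u : ι → ℝ) (e : ℕ) :
    (rayPolynomial g u).coeff e = eval u (homogeneousComponent e g) := by
  simp only [rayPolynomial, Polynomial.finsetSum_coeff, Polynomial.coeff_C_mul_X_pow]
  rw [Finset.sum_ite_eq]
  split_ifs with he
  · rfl
  · rw [homogeneousComponent_eq_zero _ _ (by simpa [Nat.lt_succ_iff] using he), map_zero]

theorem natDegree_rayPolynomial_le (g : MvPolynomial ι ℝ) (u : ι → ℝ) :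
    (rayPolynomial g u).natDegree ≤ g.totalDegree :=
  Polynomial.natDegree_le_iff_coeff_eq_zero.mpr fun e he => by
    rw [coeff_rayPolynomial, homogeneousComponent_eq_zero _ _ (by exact_mod_cast he), map_zero]

theorem eval_homogeneousComponent_nonneg {g : MvPolynomial ι ℝ} {u : ι → ℝ} {d : ℕ}
    (hd : g.totalDegree ≤ d) (hg : ∀ s : ℝ, 0 < s → 0 ≤ eval (s • u) g) :
    0 ≤ eval u (homogeneousComponent d g) := by
  rw [← coeff_rayPolynomial]
  rcases ((natDegree_rayPolynomial_le g u).trans hd).lt_or_eq with hlt | heq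
  · rw [Polynomial.coeff_eq_zero_of_natDegree_lt hlt]
  · rw [← heq]
    exact Polynomial.leadingCoeff_nonneg_of_eval_nonneg fun s hs => by
      simpa [eval_rayPolynomial] using hg s hs

theorem homogeneousComponent_totalDegree_ne_zero {R : Type*} [CommSemiring R]
    {g : MvPolynomial ι R} (hg : g ≠ 0) : homogeneousComponent g.totalDegree g ≠ 0 := by
  obtain ⟨d, hd, hdeg⟩ := Finset.exists_mem_eq_sup g.support (support_nonempty.mpr hg)
    fun d => d.sum fun _ e => e
  intro h
  have := coeff_homogeneousComponent g.totalDegree g d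
  rw [h, coeff_zero, if_pos] at this
  · exact mem_support_iff.mp hd this.symm
  · exact hdeg.symm

theorem totalDegree_le_of_nonneg_of_le {g q : MvPolynomial ι ℝ}
    (hg : ∀ x : ι → ℝ, (∀ i, 0 < x i) → 0 ≤ eval x g)
    (hgq : ∀ x : ι → ℝ, (∀ i, 0 < x i) → eval x g ≤ eval x q) :
    g.totalDegree ≤ q.totalDegree := by
  by_contra! hlt
  have hg0 : g ≠ 0 := by
    rintro rfl
    simp at hlt
  refine homogeneousComponent_totalDegree_ne_zero hg0 <|
    funext_set (fun _ => Set.Ioi 0) (fun _ => Set.Ioi_infinite 0) fun u hu => ?_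
  have hsu : ∀ s : ℝ, 0 < s → ∀ i, 0 < (s • u) i := fun s hs i => mul_pos hs (hu i trivial)
  have h₁ := eval_homogeneousComponent_nonneg le_rfl fun s hs => hg _ (hsu s hs)
  have h₂ := eval_homogeneousComponent_nonneg (g := q - g) (d := g.totalDegree)
    ((totalDegree_sub q g).trans (max_le hlt.le le_rfl))
    fun s hs => by simpa using hgq _ (hsu s hs)
  rw [map_sub, homogeneousComponent_eq_zero _ _ hlt, map_sub, map_zero] at h₂
  simp only [map_zero]
  linarith

theorem even_totalDegree_of_nonneg {g : MvPolynomial ι ℝ} (hg : ∀ x, 0 ≤ eval x g) :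
    Even g.totalDegree := by
  by_contra hodd
  rw [Nat.not_even_iff_odd] at hodd
  have hg0 : g ≠ 0 := by
    rintro rfl
    simp at hodd
  refine homogeneousComponent_totalDegree_ne_zero hg0 <| MvPolynomial.funext fun u => ?_
  have hnonneg : ∀ v, 0 ≤ eval v (homogeneousComponent g.totalDegree g) := fun v =>
    eval_homogeneousComponent_nonneg le_rfl fun s _ => hg _
  have hneg := (homogeneousComponent_isHomogeneous g.totalDegree g).eval_smul (-1) u
  rw [hodd.neg_one_pow] at hneg
  simp only [map_zero]
  linarith [hnonneg u, hnonneg ((-1 : ℝ) • u)]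

theorem totalDegree_le_of_add_sum_X_mul {k : ℕ} {s : Finset ι} {σ₀ : MvPolynomial ι ℝ}
    {σ : ι → MvPolynomial ι ℝ} (hσ₀ : ∀ x, 0 ≤ eval x σ₀) (hσ : ∀ l ∈ s, ∀ x, 0 ≤ eval x (σ l))
    (hdeg : (σ₀ + ∑ l ∈ s, X l * σ l).totalDegree ≤ 2 * k) :
    σ₀.totalDegree ≤ 2 * k ∧ ∀ l ∈ s, (σ l).totalDegree ≤ 2 * k - 2 := by
  have hterm : ∀ x : ι → ℝ, (∀ i, 0 < x i) → ∀ l ∈ s, 0 ≤ eval x (X l * σ l) :=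
    fun x hx l hl => by simpa using mul_nonneg (hx l).le (hσ l hl x)
  have hsum : ∀ x : ι → ℝ, (∀ i, 0 < x i) → 0 ≤ eval x (∑ l ∈ s, X l * σ l) :=
    fun x hx => by simpa only [map_sum] using Finset.sum_nonneg (hterm x hx)
  refine ⟨(totalDegree_le_of_nonneg_of_le (fun x _ => hσ₀ x) fun x hx => ?_).trans hdeg,
    fun l hl => ?_⟩
  · simpa using hsum x hx
  by_cases hσl : σ l = 0
  · simp [hσl]
  have hl' : (X l * σ l).totalDegree ≤ 2 * k := by
    refine (totalDegree_le_of_nonneg_of_le (fun x hx => hterm x hx l hl) fun x hx => ?_).trans hdeg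
    rw [map_add, map_sum]
    have := Finset.single_le_sum (f := fun l => eval x (X l * σ l)) (hterm x hx) hl
    linarith [hσ₀ x]
  rw [totalDegree_mul_of_isDomain (X_ne_zero l) hσl, totalDegree_X] at hl'
  obtain ⟨r, hr⟩ := even_totalDegree_of_nonneg (hσ l hl)
  omega

end Degree

section ZeroOutside

variable {ι R : Type*} [CommSemiring R]

noncomputable def zeroOutside (s : Set ι) : MvPolynomial ι R →ₐ[R] MvPolynomial ι R :=
  (rename ((↑) : s → ι)).comp (killCompl Subtype.val_injective)

theorem zeroOutside_mem_supported (s : Set ι) (p : MvPolynomial ι R) :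
    zeroOutside s p ∈ supported R s := by
  rw [supported_eq_range_rename]
  exact ⟨_, rfl⟩

theorem zeroOutside_of_mem_supported {s : Set ι} {p : MvPolynomial ι R}
    (hp : p ∈ supported R s) : zeroOutside s p = p := by
  rw [supported_eq_range_rename] at hp
  obtain ⟨q, rfl⟩ := hp
  simp [zeroOutside, killCompl_rename_app]

theorem zeroOutside_X_of_notMem {s : Set ι} {i : ι} (hi : i ∉ s) :
    zeroOutside s (X i : MvPolynomial ι R) = 0 := by
  simp [zeroOutside, killCompl, hi]

end ZeroOutside

theorem totalDegree_tangent_le {ι : Type*} [Fintype ι] (p : MvPolynomial ι ℝ) (a : ι → ℝ) :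
    (C (eval a p) + ∑ j, eval a (pderiv j p) • (X j - C (a j))).totalDegree ≤ p.totalDegree := by
  rcases Nat.eq_zero_or_pos p.totalDegree with h0 | hpos
  · rw [totalDegree_eq_zero_iff_eq_C.mp h0]
    simp
  refine (totalDegree_add _ _).trans (max_le (by simp) ?_)
  refine (totalDegree_finsetSum _ _).trans (Finset.sup_le fun j _ => ?_)
  refine (totalDegree_smul_le _ _).trans ((totalDegree_sub _ _).trans ?_)
  simpa [totalDegree_X, Nat.one_le_iff_ne_zero, pos_iff_ne_zero] using hpos

section Jensen

variable {n : ℕ}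

theorem CopSOSConvex.exists_certificate_of_mem_supported {Δ : Finset (Fin n)}
    {p : MvPolynomial (Fin n) ℝ} (hp : CopSOSConvex p) (hsupp : p ∈ supported ℝ (Δ : Set (Fin n)))
    {a : Fin n → ℝ} (ha : ∀ j, 0 ≤ a j) :
    ∃ (σ₀ : MvPolynomial (Fin n) ℝ) (σ : Fin n → MvPolynomial (Fin n) ℝ),
      (IsSumSq σ₀ ∧ σ₀ ∈ supported ℝ (Δ : Set (Fin n))) ∧
      (∀ l, IsSumSq (σ l) ∧ σ l ∈ supported ℝ (Δ : Set (Fin n))) ∧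
      p = C (eval a p) + ∑ j, eval a (pderiv j p) • (X j - C (a j)) + σ₀ + ∑ l ∈ Δ, X l * σ l := by
  obtain ⟨σ₀, σ, hσ₀, hσ, hcert⟩ := hp.exists_certificate ha
  set π := zeroOutside (R := ℝ) (Δ : Set (Fin n))
  refine ⟨π σ₀, fun l => π (σ l), ⟨hσ₀.map π, zeroOutside_mem_supported _ _⟩,
    fun l => ⟨(hσ l).map π, zeroOutside_mem_supported _ _⟩, ?_⟩
  have htangent : C (eval a p) + ∑ j, eval a (pderiv j p) • (X j - C (a j)) ∈
      supported ℝ (Δ : Set (Fin n)) := by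
    refine add_mem (Subalgebra.algebraMap_mem _ _) (sum_mem fun j _ => ?_)
    by_cases hj : j ∈ Δ
    · exact Subalgebra.smul_mem _
        (sub_mem (X_mem_supported.mpr hj) (Subalgebra.algebraMap_mem _ _)) _
    · have hjp : j ∉ p.vars := fun h => hj (by exact_mod_cast mem_supported.mp hsupp h)
      simp [pderiv_eq_zero_of_notMem_vars hjp]
  conv_lhs => rw [← zeroOutside_of_mem_supported hsupp, hcert]
  rw [map_add, map_add, zeroOutside_of_mem_supported htangent, map_sum]
  congr 1
  rw [← Finset.sum_subset (Finset.subset_univ Δ) fun l _ hl => by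
    rw [map_mul, zeroOutside_X_of_notMem (by exact_mod_cast hl), zero_mul]]
  refine Finset.sum_congr rfl fun l hl => ?_
  rw [map_mul, zeroOutside_of_mem_supported (X_mem_supported.mpr hl)]

theorem eval_le_riesz_of_copSOSConvex {k : ℕ} {Δ : Finset (Fin n)} {p : MvPolynomial (Fin n) ℝ}
    (hsupp : p ∈ supported ℝ (Δ : Set (Fin n))) (hdeg : p.totalDegree ≤ 2 * k)
    (hp : CopSOSConvex p) {y : (Fin n →₀ ℕ) → ℝ} (hy0 : y 0 = 1)
    (hMom : ∀ σ : MvPolynomial (Fin n) ℝ, IsSOS σ → σ ∈ supported ℝ (Δ : Set (Fin n)) →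
      σ.totalDegree ≤ 2 * k → 0 ≤ riesz σ y)
    (hLoc : ∀ j ∈ Δ, ∀ σ : MvPolynomial (Fin n) ℝ, IsSOS σ →
      σ ∈ supported ℝ (Δ : Set (Fin n)) → σ.totalDegree ≤ 2 * k - 2 → 0 ≤ riesz (X j * σ) y)
    {a : Fin n → ℝ} (ha : ∀ j, 0 ≤ a j) (hay : ∀ j ∈ Δ, a j = y (Finsupp.single j 1)) :
    eval a p ≤ riesz p y := by
  obtain ⟨σ₀, σ, ⟨hσ₀, hσ₀Δ⟩, hσ, hcert⟩ := hp.exists_certificate_of_mem_supported hsupp ha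
  have hrest : σ₀ + ∑ l ∈ Δ, X l * σ l =
      p - (C (eval a p) + ∑ j, eval a (pderiv j p) • (X j - C (a j))) := by
    linear_combination -hcert
  obtain ⟨hσ₀deg, hσdeg⟩ := totalDegree_le_of_add_sum_X_mul (fun x => hσ₀.eval_nonneg x)
    (fun l _ x => (hσ l).1.eval_nonneg x) (hrest ▸ (totalDegree_sub _ _).trans
      (max_le hdeg ((totalDegree_tangent_le p a).trans hdeg)))
  have htangent : ∀ j, riesz (eval a (pderiv j p) • (X j - C (a j))) y = 0 := by
    intro j
    by_cases hj : j ∈ Δ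
    · rw [← rieszLinear_apply, map_smul, map_sub, rieszLinear_apply, rieszLinear_apply, riesz_X,
        riesz_C, hy0, hay j hj, mul_one, sub_self, smul_zero]
    · have hjp : j ∉ p.vars := fun h => hj (by exact_mod_cast mem_supported.mp hsupp h)
      simp [pderiv_eq_zero_of_notMem_vars hjp, ← rieszLinear_apply]
  have hriesz : riesz p y = eval a p + riesz σ₀ y + ∑ l ∈ Δ, riesz (X l * σ l) y := by
    conv_lhs => rw [hcert]
    simp only [← rieszLinear_apply, map_add, map_sum]
    simp only [rieszLinear_apply, htangent, riesz_C, hy0, mul_one, Finset.sum_const_zero, add_zero]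
  rw [hriesz, add_assoc, le_add_iff_nonneg_right]
  exact add_nonneg (hMom σ₀ (isSOS_iff_isSumSq.mpr hσ₀) hσ₀Δ hσ₀deg) (Finset.sum_nonneg
    fun l hl => hLoc l hl (σ l) (isSOS_iff_isSumSq.mpr (hσ l).1) (hσ l).2 (hσdeg l hl))

end Jensen

/-- Theorem 4.4: for cop-SOS convex blocks `fᵢ` and any feasible point `y*`
of the sparse moment relaxation of order `k`, the point `x* = π(y*)` is
feasible for `min{f(x) : Ax = b, Cx ≥ d, x ≥ 0}` and `f(x*) ≤ ⟨f, y*⟩`.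
Consequently, if `⟨f, y*⟩` is also a lower bound for `f` on the feasible set
(as when `y*` is optimal for the relaxation), then the relaxation value
equals the minimum and `x*` is a global minimizer. -/
theorem stmt17 (n m m1 m2 k : ℕ) (Δ : Fin m → Finset (Fin n))
    (hcover : (⋃ i, (Δ i : Set (Fin n))) = Set.univ)
    (A : Matrix (Fin m1) (Fin n) ℝ) (b : Fin m1 → ℝ)
    (C : Matrix (Fin m2) (Fin n) ℝ) (d : Fin m2 → ℝ)
    (f : Fin m → MvPolynomial (Fin n) ℝ)
    (hfsupp : ∀ i, f i ∈ MvPolynomial.supported ℝ (Δ i : Set (Fin n)))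
    (hfdeg : ∀ i, (f i).totalDegree ≤ 2 * k)
    (hfcvx : ∀ i, CopSOSConvex (f i))
    (y : (Fin n →₀ ℕ) → ℝ) (hy0 : y 0 = 1)
    (hMom : ∀ i : Fin m, ∀ σ : MvPolynomial (Fin n) ℝ,
      IsSOS σ → σ ∈ MvPolynomial.supported ℝ (Δ i : Set (Fin n)) →
      σ.totalDegree ≤ 2 * k → 0 ≤ riesz σ y)
    (hLoc : ∀ i : Fin m, ∀ j ∈ Δ i, ∀ σ : MvPolynomial (Fin n) ℝ,
      IsSOS σ → σ ∈ MvPolynomial.supported ℝ (Δ i : Set (Fin n)) →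
      σ.totalDegree ≤ 2 * k - 2 → 0 ≤ riesz (X j * σ) y)
    (xs : Fin n → ℝ) (hxs : ∀ j, xs j = y (Finsupp.single j 1))
    (hAx : A.mulVec (fun j => y (Finsupp.single j 1)) = b)
    (hCx : ∀ j, d j ≤ C.mulVec (fun j' => y (Finsupp.single j' 1)) j) :
    ((A.mulVec xs = b ∧ (∀ j, d j ≤ C.mulVec xs j) ∧ (∀ j, 0 ≤ xs j)) ∧
      eval xs (∑ i, f i) ≤ ∑ i, riesz (f i) y) ∧
    ((∀ x : Fin n → ℝ,
        A.mulVec x = b → (∀ j, d j ≤ C.mulVec x j) → (∀ j, 0 ≤ x j) →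
        (∑ i, riesz (f i) y) ≤ eval x (∑ i, f i)) →
      (eval xs (∑ i, f i) = ∑ i, riesz (f i) y ∧
        ∀ x : Fin n → ℝ,
          A.mulVec x = b → (∀ j, d j ≤ C.mulVec x j) → (∀ j, 0 ≤ x j) →
          eval xs (∑ i, f i) ≤ eval x (∑ i, f i))) := by
  obtain rfl : xs = fun j => y (Finsupp.single j 1) := funext hxs
  have hxs_nonneg : ∀ j, 0 ≤ y (Finsupp.single j 1) := fun j => by
    obtain ⟨i, hij⟩ := Set.mem_iUnion.mp (hcover.symm ▸ Set.mem_univ j)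
    simpa [riesz_X] using
      hLoc i j hij 1 (isSOS_iff_isSumSq.mpr IsSumSq.one) (one_mem _) (by simp)
  have hjensen : eval (fun j => y (Finsupp.single j 1)) (∑ i, f i) ≤ ∑ i, riesz (f i) y := by
    rw [map_sum]
    exact Finset.sum_le_sum fun i _ => eval_le_riesz_of_copSOSConvex (hfsupp i) (hfdeg i)
      (hfcvx i) hy0 (hMom i) (hLoc i) hxs_nonneg fun j _ => rfl
  refine ⟨⟨⟨hAx, hCx, hxs_nonneg⟩, hjensen⟩, fun hlb => ⟨?_, fun x hAx' hCx' hx => ?_⟩⟩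
  · exact hjensen.antisymm (hlb _ hAx hCx hxs_nonneg)
  · exact hjensen.trans (hlb x hAx' hCx' hx)
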